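/- arXiv:2508.21717 — 6 statements merged into one kernel-verified Lean document; each statement's English description precedes it below -/
import Mathlib

section
/- Let I be a monomial ideal in ℂ[x,y,z] whose complement of exponents S = ℕ³ \ {γ : x^γ ∈ I} is finite, and suppose I is Borel-fixed, i.e., writing Ĩ for the exponent set of I: if γ ∈ Ĩ and γ_z > 0 then γ + e_y − e_z ∈ Ĩ and γ + e_x − e_z ∈ Ĩ, and if γ_y > 0 then γ + e_x − e_y ∈ Ĩ. If the colength l = |ℕ³ \ Ĩ| satisfies C(k+2,3) ≤ l < C(k+3,3), and x^{m₁} is a minimal generator of I (i.e., m₁ is minimal with (m₁,0,0) ∈ Ĩ), then m₁ ≤ k. -/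
open Finset

/-- triangle `{(b,c) : b+c ≤ n}` as a Finset -/
def Tri (n : ℕ) : Finset (ℕ × ℕ) :=
  (range (n+1) ×ˢ range (n+1)).filter (fun p => p.1 + p.2 ≤ n)

lemma mem_Tri {n : ℕ} {p : ℕ × ℕ} : p ∈ Tri n ↔ p.1 + p.2 ≤ n := by
  simp [Tri, Finset.mem_filter, Finset.mem_product]; omega

lemma card_Tri (n : ℕ) : (Tri n).card = (n + 2).choose 2 := by
  induction n with
  | zero => decide
  | succ n ih =>
    have hsplit : Tri (n+1) = Tri n ∪ Finset.HasAntidiagonal.antidiagonal (n+1) := by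
      ext p
      simp [mem_Tri, Finset.HasAntidiagonal.mem_antidiagonal]
      omega
    have hdisj : Disjoint (Tri n) (Finset.HasAntidiagonal.antidiagonal (n+1)) := by
      rw [Finset.disjoint_left]
      intro p hp hp'
      rw [mem_Tri] at hp
      rw [Finset.HasAntidiagonal.mem_antidiagonal] at hp'
      omega
    rw [hsplit, Finset.card_union_of_disjoint hdisj, ih,
      Finset.Nat.card_antidiagonal]
    rw [show n + 1 + 2 = (n + 2) + 1 from rfl, Nat.choose_succ_succ' (n + 2) 1,
      Nat.choose_one_right, show (1:ℕ) + 1 = 2 from rfl]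
    omega

/-- slice `{(a,b,c) : a+b+c = n}` as a Finset -/
def Slice (n : ℕ) : Finset (ℕ × ℕ × ℕ) :=
  (range (n+1) ×ˢ range (n+1) ×ˢ range (n+1)).filter
    (fun p => p.1 + p.2.1 + p.2.2 = n)

lemma mem_Slice {n : ℕ} {p : ℕ × ℕ × ℕ} : p ∈ Slice n ↔ p.1 + p.2.1 + p.2.2 = n := by
  simp [Slice, Finset.mem_filter, Finset.mem_product]; omega

lemma card_Slice (n : ℕ) : (Slice n).card = (n + 2).choose 2 := by
  rw [← card_Tri n]
  apply Finset.card_nbij' (i := fun p => (p.2.1, p.2.2)) (j := fun q => (n - q.1 - q.2, q.1, q.2))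
  · intro p hp; rw [Finset.mem_coe, mem_Slice] at hp; rw [Finset.mem_coe, mem_Tri]; dsimp; omega
  · intro q hq; rw [Finset.mem_coe, mem_Tri] at hq; rw [Finset.mem_coe, mem_Slice]; dsimp; omega
  · intro p hp; rw [Finset.mem_coe, mem_Slice] at hp
    ext <;> dsimp <;> omega
  · intro q hq; rfl

/-- tetrahedron `{(a,b,c) : a+b+c ≤ k}` as a Finset -/
def Tet (k : ℕ) : Finset (ℕ × ℕ × ℕ) :=
  (range (k+1) ×ˢ range (k+1) ×ˢ range (k+1)).filter
    (fun p => p.1 + p.2.1 + p.2.2 ≤ k)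

lemma mem_Tet {k : ℕ} {p : ℕ × ℕ × ℕ} : p ∈ Tet k ↔ p.1 + p.2.1 + p.2.2 ≤ k := by
  simp [Tet, Finset.mem_filter, Finset.mem_product]; omega

lemma card_Tet (k : ℕ) : (Tet k).card = (k + 3).choose 3 := by
  induction k with
  | zero => decide
  | succ k ih =>
    have hsplit : Tet (k+1) = Tet k ∪ Slice (k+1) := by
      ext p; simp [mem_Tet, mem_Slice]; omega
    have hdisj : Disjoint (Tet k) (Slice (k+1)) := by
      rw [Finset.disjoint_left]
      intro p hp hp'
      rw [mem_Tet] at hp; rw [mem_Slice] at hp'; omega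
    rw [hsplit, Finset.card_union_of_disjoint hdisj, ih, card_Slice]
    rw [show k + 1 + 3 = (k + 3) + 1 from rfl, Nat.choose_succ_succ' (k + 3) 2,
      show k + 1 + 2 = k + 3 from rfl, Nat.add_comm]

/-- Collapsing a point of a Borel-fixed set to the x-axis. -/
lemma collapse (S : Set (ℕ × ℕ × ℕ))
    (hb2 : ∀ γ ∈ S, 1 ≤ γ.2.2 → (γ.1 + 1, γ.2.1, γ.2.2 - 1) ∈ S)
    (hb3 : ∀ γ ∈ S, 1 ≤ γ.2.1 → (γ.1 + 1, γ.2.1 - 1, γ.2.2) ∈ S) :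
    ∀ n (γ : ℕ × ℕ × ℕ), γ.2.1 + γ.2.2 ≤ n → γ ∈ S →
      (γ.1 + γ.2.1 + γ.2.2, 0, 0) ∈ S := by
  intro n
  induction n with
  | zero =>
    intro γ h hγ
    obtain ⟨a, b, c⟩ := γ
    simp only at h ⊢
    have hb : b = 0 := by omega
    have hc : c = 0 := by omega
    subst hb; subst hc
    simpa using hγ
  | succ n ih =>
    intro γ h hγ
    obtain ⟨a, b, c⟩ := γ
    simp only at h ⊢
    rcases Nat.eq_zero_or_pos c with hc | hc
    · rcases Nat.eq_zero_or_pos b with hbz | hbz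
      · subst hc; subst hbz; simpa using hγ
      · have := hb3 (a, b, c) hγ hbz
        have h2 := ih (a + 1, b - 1, c) (by dsimp; omega) this
        simp only at h2
        convert h2 using 2
        omega
    · have := hb2 (a, b, c) hγ hc
      have h2 := ih (a + 1, b, c - 1) (by dsimp; omega) this
      simp only at h2
      convert h2 using 2
      omega

/-- If a Borel-fixed staircase `S ⊆ ℕ³` (upward closed, finite complement,
closed under the Borel exchange moves) has colength `l` with
`C(k+2,3) ≤ l < C(k+3,3)`, and `m₁` is minimal with `(m₁,0,0) ∈ S`, then `m₁ ≤ k`. -/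
theorem minimal_pure_exponent_le (S : Set (ℕ × ℕ × ℕ))
    (hup : ∀ γ ∈ S, ∀ δ : ℕ × ℕ × ℕ, γ.1 ≤ δ.1 → γ.2.1 ≤ δ.2.1 → γ.2.2 ≤ δ.2.2 → δ ∈ S)
    (hfin : Sᶜ.Finite)
    (hb1 : ∀ γ ∈ S, 1 ≤ γ.2.2 → (γ.1, γ.2.1 + 1, γ.2.2 - 1) ∈ S)
    (hb2 : ∀ γ ∈ S, 1 ≤ γ.2.2 → (γ.1 + 1, γ.2.1, γ.2.2 - 1) ∈ S)
    (hb3 : ∀ γ ∈ S, 1 ≤ γ.2.1 → (γ.1 + 1, γ.2.1 - 1, γ.2.2) ∈ S)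
    (k l m₁ : ℕ) (hl : l = Sᶜ.ncard)
    (hlo : (k + 2).choose 3 ≤ l) (hhi : l < (k + 3).choose 3)
    (hmem : (m₁, 0, 0) ∈ S) (hminimal : ∀ m < m₁, (m, 0, 0) ∉ S) :
    m₁ ≤ k := by
  by_contra hgt
  push_neg at hgt
  -- every point of the tetrahedron of size k is outside S
  have hsub : (↑(Tet k) : Set (ℕ × ℕ × ℕ)) ⊆ Sᶜ := by
    intro γ hγ hγS
    rw [Finset.mem_coe, mem_Tet] at hγ
    have hx := collapse S hb2 hb3 (γ.2.1 + γ.2.2) γ le_rfl hγS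
    exact hminimal _ (by omega) hx
  have hcard : (Tet k).card ≤ Sᶜ.ncard := by
    have := Set.ncard_le_ncard hsub hfin
    simpa [Set.ncard_coe_finset] using this
  rw [card_Tet] at hcard
  omega
end

section
/- Let Ĩ ⊆ ℕ³ be an upward-closed set (γ ∈ Ĩ and γ ≤ δ coordinatewise implies δ ∈ Ĩ) that is Borel-fixed: if γ ∈ Ĩ and γ_z ≥ 1 then γ + e_y − e_z ∈ Ĩ and γ + e_x − e_z ∈ Ĩ; if γ ∈ Ĩ and γ_y ≥ 1 then γ + e_x − e_y ∈ Ĩ. Let α = (α_x, α_y, α_z) ∈ ℤ³ with α_x < 0, α_y ≥ 0, α_z ≥ 0, and α_x + α_y + α_z ≤ −1. Then for any minimal element γ of Ĩ (i.e., γ ∈ Ĩ but γ − e_x, γ − e_y, γ − e_z ∉ Ĩ whenever the corresponding coordinate is positive), γ + α ∉ Ĩ (interpreting the sum in ℤ³; if any coordinate is negative it is automatically not in Ĩ). -/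
/-- Lemma 3.1: for a Borel-fixed staircase `S ⊆ ℕ³` and a vector
`α ∈ ℤ³` with `α_x < 0`, `α_y, α_z ≥ 0`, `α_x + α_y + α_z ≤ −1`,
any minimal element `γ` of `S` satisfies `γ + α ∉ S` (the sum taken in `ℤ³`;
if some coordinate is negative, the point is automatically not in `S`). -/
theorem minimal_generator_translate_not_mem (S : Set (ℕ × ℕ × ℕ))
    (hup : ∀ γ ∈ S, ∀ δ : ℕ × ℕ × ℕ, γ.1 ≤ δ.1 → γ.2.1 ≤ δ.2.1 → γ.2.2 ≤ δ.2.2 → δ ∈ S)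
    (hb1 : ∀ γ ∈ S, 1 ≤ γ.2.2 → (γ.1, γ.2.1 + 1, γ.2.2 - 1) ∈ S)
    (hb2 : ∀ γ ∈ S, 1 ≤ γ.2.2 → (γ.1 + 1, γ.2.1, γ.2.2 - 1) ∈ S)
    (hb3 : ∀ γ ∈ S, 1 ≤ γ.2.1 → (γ.1 + 1, γ.2.1 - 1, γ.2.2) ∈ S)
    (α : ℤ × ℤ × ℤ) (hax : α.1 < 0) (hay : 0 ≤ α.2.1) (haz : 0 ≤ α.2.2)
    (hsum : α.1 + α.2.1 + α.2.2 ≤ -1)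
    (γ : ℕ × ℕ × ℕ) (hγ : γ ∈ S)
    (hmin1 : 1 ≤ γ.1 → (γ.1 - 1, γ.2.1, γ.2.2) ∉ S)
    (hmin2 : 1 ≤ γ.2.1 → (γ.1, γ.2.1 - 1, γ.2.2) ∉ S)
    (hmin3 : 1 ≤ γ.2.2 → (γ.1, γ.2.1, γ.2.2 - 1) ∉ S) :
    ∀ δ : ℕ × ℕ × ℕ,
      (δ.1 : ℤ) = (γ.1 : ℤ) + α.1 → (δ.2.1 : ℤ) = (γ.2.1 : ℤ) + α.2.1 →
      (δ.2.2 : ℤ) = (γ.2.2 : ℤ) + α.2.2 → δ ∉ S := by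
  intro δ h1 h2 h3 hδ
  -- move z-units to x
  have moveZ : ∀ b x y z, (x, y, z + b) ∈ S → (x + b, y, z) ∈ S := by
    intro b
    induction b with
    | zero => intro x y z h; simpa using h
    | succ n ih =>
      intro x y z h
      have h' := hb2 _ h (by simp; omega)
      simp only at h'
      have : (x + 1, y, z + n) ∈ S := by
        have : z + (n + 1) - 1 = z + n := by omega
        rwa [this] at h'
      have := ih (x + 1) y z this
      have e : x + 1 + n = x + (n + 1) := by omega
      rwa [e] at this
  have moveY : ∀ a x y z, (x, y + a, z) ∈ S → (x + a, y, z) ∈ S := by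
    intro a
    induction a with
    | zero => intro x y z h; simpa using h
    | succ n ih =>
      intro x y z h
      have h' := hb3 _ h (by simp; omega)
      simp only at h'
      have : (x + 1, y + n, z) ∈ S := by
        have : y + (n + 1) - 1 = y + n := by omega
        rwa [this] at h'
      have := ih (x + 1) y z this
      have e : x + 1 + n = x + (n + 1) := by omega
      rwa [e] at this
  obtain ⟨dx, dy, dz⟩ := δ
  obtain ⟨gx, gy, gz⟩ := γ
  simp only at h1 h2 h3 hδ hmin1 hmin2 hmin3
  set a := α.2.1.toNat with ha
  set b := α.2.2.toNat with hb
  have hya : (a : ℤ) = α.2.1 := Int.toNat_of_nonneg hay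
  have hzb : (b : ℤ) = α.2.2 := Int.toNat_of_nonneg haz
  have hdy : dy = gy + a := by omega
  have hdz : dz = gz + b := by omega
  subst hdy hdz
  have s1 : (dx + b, gy + a, gz) ∈ S := moveZ b dx (gy + a) gz hδ
  have s2 : (dx + b + a, gy, gz) ∈ S := moveY a (dx + b) gy gz s1
  have hx1 : 1 ≤ gx := by omega
  have hle : dx + b + a ≤ gx - 1 := by omega
  exact hmin1 hx1 (hup _ s2 (gx - 1, gy, gz) hle le_rfl le_rfl)
end

section
/- Let J, J' be monomial ideals in S = ℂ[y,z] with finite colengths l and l' respectively. Then dim_ℂ Hom_S(J, S/J') ≤ l + l'. -/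
open MvPolynomial

/-- A monomial ideal: an ideal generated by a set of monomials. -/
def IsMonomialIdeal (J : Ideal (MvPolynomial (Fin 2) ℂ)) : Prop :=
  ∃ G : Set (Fin 2 →₀ ℕ),
    J = Ideal.span ((fun d => (monomial d (1 : ℂ) : MvPolynomial (Fin 2) ℂ)) '' G)

noncomputable section HDLaux

namespace HDL

abbrev Spoly : Type := MvPolynomial (Fin 2) ℂ

/-- The exponent `(u, v)` as a `Fin 2 →₀ ℕ`. -/
def ee (u v : ℕ) : Fin 2 →₀ ℕ := Finsupp.single 0 u + Finsupp.single 1 v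

lemma ee_apply0 (u v : ℕ) : ee u v 0 = u := by simp [ee]

lemma ee_apply1 (u v : ℕ) : ee u v 1 = v := by simp [ee]

lemma ee_eq_self (m : Fin 2 →₀ ℕ) : ee (m 0) (m 1) = m := by
  ext i
  fin_cases i
  · simpa using ee_apply0 (m 0) (m 1)
  · simpa using ee_apply1 (m 0) (m 1)

lemma ee_le_ee {u v u' v' : ℕ} (h1 : u ≤ u') (h2 : v ≤ v') : ee u v ≤ ee u' v' := by
  rw [Finsupp.le_def]
  intro i
  fin_cases i
  · simpa [ee_apply0] using h1
  · simpa [ee_apply1] using h2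

lemma ee_add (u v u' v' : ℕ) : ee u v + ee u' v' = ee (u + u') (v + v') := by
  ext i
  fin_cases i
  · simp [ee_apply0]
  · simp [ee_apply1]

lemma monomial_ee_mul (u v u' v' : ℕ) :
    (monomial (ee u v) 1 : Spoly) * monomial (ee u' v') 1 = monomial (ee (u + u') (v + v')) 1 := by
  rw [monomial_mul, ee_add, one_mul]

lemma X1_eq : (X 1 : Spoly) = monomial (ee 0 1) 1 := by
  have : ee 0 1 = Finsupp.single 1 1 := by simp [ee]
  rw [this, ← X_pow_eq_monomial, pow_one]

/-- Monomial membership is upward closed for any ideal. -/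
lemma monomial_mem_mono {J : Ideal Spoly} {d m : Fin 2 →₀ ℕ}
    (hd : monomial d (1 : ℂ) ∈ J) (hle : d ≤ m) : monomial m (1 : ℂ) ∈ J := by
  have h : (monomial (m - d) 1 : Spoly) * monomial d 1 = monomial m 1 := by
    rw [monomial_mul, one_mul, tsub_add_cancel_of_le hle]
  rw [← h]
  exact Ideal.mul_mem_left _ _ hd

/-- For a monomial ideal, the monomials of the support of an element are in the ideal. -/
lemma monomial_mem_of_mem_support {J : Ideal Spoly} (hJ : IsMonomialIdeal J)
    {p : Spoly} (hp : p ∈ J) {m : Fin 2 →₀ ℕ} (hm : m ∈ p.support) :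
    monomial m (1 : ℂ) ∈ J := by
  obtain ⟨G, hG⟩ := hJ
  rw [hG] at hp
  obtain ⟨g, hgG, hgle⟩ := mem_ideal_span_monomial_image.mp hp m hm
  have hg : monomial g (1 : ℂ) ∈ J := by
    rw [hG]
    exact Ideal.subset_span ⟨g, hgG, rfl⟩
  exact monomial_mem_mono hg hgle

/-- Classes of monomials not in a monomial ideal are linearly independent in the quotient;
hence any finite set of them has cardinality at most the colength. -/
lemma card_le_finrank {J : Ideal Spoly} (hJ : IsMonomialIdeal J)
    [Module.Finite ℂ (Spoly ⧸ J)] (D : Finset (Fin 2 →₀ ℕ))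
    (hD : ∀ d ∈ D, monomial d (1 : ℂ) ∉ J) :
    D.card ≤ Module.finrank ℂ (Spoly ⧸ J) := by
  classical
  have hli : LinearIndependent ℂ
      (fun d : D => (Ideal.Quotient.mk J (monomial (d : Fin 2 →₀ ℕ) 1) : Spoly ⧸ J)) := by
    rw [Fintype.linearIndependent_iff]
    intro g hg d0
    set p : Spoly := ∑ d : D, g d • monomial (d : Fin 2 →₀ ℕ) (1 : ℂ) with hpdef
    have hpJ : p ∈ J := by
      rw [← Ideal.Quotient.eq_zero_iff_mem]
      have : (Ideal.Quotient.mk J) p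
          = ∑ d : D, g d • Ideal.Quotient.mk J (monomial (d : Fin 2 →₀ ℕ) 1) := by
        rw [hpdef, map_sum]
        exact Finset.sum_congr rfl fun d _ =>
          map_smul (Ideal.Quotient.mkₐ ℂ J).toLinearMap _ _
      rw [this, hg]
    have hcoeff : ∀ d : D, p.coeff (d : Fin 2 →₀ ℕ) = g d := by
      intro d
      rw [hpdef, coeff_sum]
      have : ∀ d' : D, d' ≠ d →
          (g d' • monomial (d' : Fin 2 →₀ ℕ) (1 : ℂ)).coeff (d : Fin 2 →₀ ℕ) = 0 := by
        intro d' hne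
        have : (d' : Fin 2 →₀ ℕ) ≠ (d : Fin 2 →₀ ℕ) := fun h => hne (Subtype.ext h)
        simp [coeff_monomial, this]
      rw [Finset.sum_eq_single d (fun d' _ hne => this d' hne) (by simp)]
      simp [coeff_monomial]
    by_contra hne
    have hd0supp : (d0 : Fin 2 →₀ ℕ) ∈ p.support := by
      rw [mem_support_iff, hcoeff d0]
      exact hne
    exact hD d0 d0.2 (monomial_mem_of_mem_support hJ hpJ hd0supp)
  have := hli.fintype_card_le_finrank
  simpa using this

/-- A monomial ideal of finite colength contains a pure power of each variable. -/
lemma exists_pure_powers {J : Ideal Spoly} (hJ : IsMonomialIdeal J)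
    [Module.Finite ℂ (Spoly ⧸ J)] :
    ∃ N : ℕ, monomial (ee N 0) (1 : ℂ) ∈ J ∧ monomial (ee 0 N) (1 : ℂ) ∈ J := by
  classical
  set l := Module.finrank ℂ (Spoly ⧸ J)
  have h0 : ∃ n, monomial (ee n 0) (1 : ℂ) ∈ J := by
    by_contra hc
    push_neg at hc
    have hinj : Function.Injective (fun n : ℕ => ee n 0) := by
      intro n m h
      have := congrArg (fun f : Fin 2 →₀ ℕ => f 0) h
      simpa [ee_apply0] using this
    have hcard := card_le_finrank hJ ((Finset.range (l + 1)).image (fun n => ee n 0))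
      (by
        intro d hd
        simp only [Finset.mem_image, Finset.mem_range] at hd
        obtain ⟨n, _, rfl⟩ := hd
        exact hc n)
    rw [Finset.card_image_of_injective _ hinj, Finset.card_range] at hcard
    omega
  have h1 : ∃ n, monomial (ee 0 n) (1 : ℂ) ∈ J := by
    by_contra hc
    push_neg at hc
    have hinj : Function.Injective (fun n : ℕ => ee 0 n) := by
      intro n m h
      have := congrArg (fun f : Fin 2 →₀ ℕ => f 1) h
      simpa [ee_apply1] using this
    have hcard := card_le_finrank hJ ((Finset.range (l + 1)).image (fun n => ee 0 n))
      (by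
        intro d hd
        simp only [Finset.mem_image, Finset.mem_range] at hd
        obtain ⟨n, _, rfl⟩ := hd
        exact hc n)
    rw [Finset.card_image_of_injective _ hinj, Finset.card_range] at hcard
    omega
  obtain ⟨n0, hn0⟩ := h0
  obtain ⟨n1, hn1⟩ := h1
  refine ⟨max n0 n1, ?_, ?_⟩
  · exact monomial_mem_mono hn0 (ee_le_ee (le_max_left _ _) le_rfl)
  · exact monomial_mem_mono hn1 (ee_le_ee le_rfl (le_max_right _ _))

/-- The syzygy map `B : (S/J')^{N+1} → (S/J')^N`,
`(B c)_s = z • c_s - y^{α s} • c_{s+1}`. -/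
def Bmap (J' : Ideal Spoly) (N : ℕ) (α : ℕ → ℕ) :
    (Fin (N + 1) → Spoly ⧸ J') →ₗ[Spoly] (Fin N → Spoly ⧸ J') where
  toFun c := fun s =>
    (X 1 : Spoly) • c s.castSucc - (monomial (ee (α s) 0) 1 : Spoly) • c s.succ
  map_add' c d := by
    funext s
    simp only [Pi.add_apply, smul_add]
    abel
  map_smul' r c := by
    funext s
    simp only [Pi.smul_apply, RingHom.id_apply, smul_sub, smul_comm r]

lemma Bmap_single (J' : Ideal Spoly) (N : ℕ) (α : ℕ → ℕ) (t : Fin (N + 1)) (q : Spoly ⧸ J')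
    (s : Fin N) :
    Bmap J' N α (Pi.single t q) s =
      (if s.castSucc = t then (X 1 : Spoly) • q else 0)
        - (if s.succ = t then (monomial (ee (α s) 0) 1 : Spoly) • q else 0) := by
  simp only [Bmap, LinearMap.coe_mk, AddHom.coe_mk, Pi.single_apply]
  by_cases h1 : s.castSucc = t <;> by_cases h2 : s.succ = t <;> simp [h1, h2]

end HDL

end HDLaux

set_option maxHeartbeats 1000000 in
/-- Lemma 2.7: for monomial ideals `J, J'` of finite colengths `l, l'` in
`S = ℂ[y,z]`, `dim_ℂ Hom_S(J, S/J') ≤ l + l'`. -/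
theorem hom_dim_le (J J' : Ideal (MvPolynomial (Fin 2) ℂ))
    (hJ : IsMonomialIdeal J) (hJ' : IsMonomialIdeal J')
    (l l' : ℕ)
    (hfl : Module.Finite ℂ (MvPolynomial (Fin 2) ℂ ⧸ J))
    (hfl' : Module.Finite ℂ (MvPolynomial (Fin 2) ℂ ⧸ J'))
    (hl : Module.finrank ℂ (MvPolynomial (Fin 2) ℂ ⧸ J) = l)
    (hl' : Module.finrank ℂ (MvPolynomial (Fin 2) ℂ ⧸ J') = l') :
    Module.finrank ℂ (J →ₗ[MvPolynomial (Fin 2) ℂ] (MvPolynomial (Fin 2) ℂ ⧸ J'))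
      ≤ l + l' := by
  classical
  obtain ⟨N, hyN, hzN⟩ := HDL.exists_pure_powers hJ
  -- the staircase profile `a t` = least `x` with `y^x z^t ∈ J`
  have hrow : ∀ t : ℕ, ∃ x : ℕ, monomial (HDL.ee x t) (1 : ℂ) ∈ J := fun t =>
    ⟨N, HDL.monomial_mem_mono hyN (HDL.ee_le_ee le_rfl (Nat.zero_le t))⟩
  set a : ℕ → ℕ := fun t => Nat.find (hrow t) with hadef
  have ha : ∀ t, monomial (HDL.ee (a t) t) (1 : ℂ) ∈ J := fun t => Nat.find_spec (hrow t)
  have hamin : ∀ t x, x < a t → monomial (HDL.ee x t) (1 : ℂ) ∉ J := fun t x h =>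
    Nat.find_min (hrow t) h
  have hmono : ∀ t, a (t + 1) ≤ a t := fun t =>
    Nat.find_le (HDL.monomial_mem_mono (ha t) (HDL.ee_le_ee le_rfl (Nat.le_succ t)))
  have haN : a N = 0 := Nat.le_zero.mp (Nat.find_le hzN)
  set α : ℕ → ℕ := fun t => a t - a (t + 1) with hαdef
  have hα : ∀ t, α t + a (t + 1) = a t := fun t => Nat.sub_add_cancel (hmono t)
  -- J is generated by the staircase monomials
  have hspan : J = Ideal.span ((fun d => (monomial d (1 : ℂ) : HDL.Spoly)) ''
      (Set.range fun t : Fin (N + 1) => HDL.ee (a ↑t) ↑t)) := by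
    apply le_antisymm
    · intro p hp
      rw [mem_ideal_span_monomial_image]
      intro m hm
      have hmJ : monomial m (1 : ℂ) ∈ J := HDL.monomial_mem_of_mem_support hJ hp hm
      by_cases hle : m 1 ≤ N
      · refine ⟨HDL.ee (a (m 1)) (m 1), ⟨⟨m 1, by omega⟩, rfl⟩, ?_⟩
        have hmJ' : monomial (HDL.ee (m 0) (m 1)) (1 : ℂ) ∈ J := by
          rw [HDL.ee_eq_self m]; exact hmJ
        have ham : a (m 1) ≤ m 0 := Nat.find_le hmJ'
        have := HDL.ee_le_ee ham (le_refl (m 1))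
        rwa [HDL.ee_eq_self m] at this
      · refine ⟨HDL.ee (a N) N, ⟨⟨N, by omega⟩, rfl⟩, ?_⟩
        rw [haN]
        have : HDL.ee 0 N ≤ HDL.ee (m 0) (m 1) := HDL.ee_le_ee (Nat.zero_le _) (by omega)
        rwa [HDL.ee_eq_self m] at this
    · rw [Ideal.span_le]
      rintro x ⟨d, ⟨t, rfl⟩, rfl⟩
      exact ha ↑t
  -- notation
  set Q := MvPolynomial (Fin 2) ℂ ⧸ J' with hQdef
  set mkq : HDL.Spoly → Q := ⇑(Ideal.Quotient.mk J') with hmkqdef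
  set mono : ℕ → ℕ → HDL.Spoly := fun u v => monomial (HDL.ee u v) 1 with hmonodef
  have hmulmono : ∀ u v u' v', mono u v * mono u' v' = mono (u + u') (v + v') :=
    fun u v u' v' => HDL.monomial_ee_mul u v u' v'
  have hX1mono : ∀ u v, (X 1 : HDL.Spoly) * mono u v = mono u (v + 1) := by
    intro u v
    rw [HDL.X1_eq, hmonodef]
    dsimp only
    rw [HDL.monomial_ee_mul, Nat.zero_add, Nat.add_comm 1 v]
  have hsmulmk : ∀ (r x : HDL.Spoly), r • mkq x = mkq (r * x) := by
    intro r x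
    rw [← smul_eq_mul]
    rfl
  have hmonoeq : ∀ u v : ℕ, (monomial (HDL.ee u v) (1 : ℂ) : HDL.Spoly) = mono u v :=
    fun _ _ => rfl
  set B := HDL.Bmap J' N α with hBdef
  set R : Submodule HDL.Spoly (Fin N → Q) := LinearMap.range B with hRdef
  set Rc : Submodule ℂ (Fin N → Q) := R.restrictScalars ℂ with hRcdef
  -- Claim 1 : `y^{a s} • f_s ∈ range B`, by descending induction
  have C1 : ∀ (d : ℕ) (s : Fin N), (s : ℕ) + 1 + d = N →
      Pi.single s (mkq (mono (a ↑s) 0)) ∈ R := by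
    intro d
    induction d with
    | zero =>
      intro s hs
      have hsN : (s : ℕ) + 1 = N := by omega
      have hαs : α ↑s = a ↑s := by
        rw [hαdef]; dsimp only; rw [hsN, haN, Nat.sub_zero]
      refine ⟨Pi.single (Fin.last N) (-(mkq 1)), ?_⟩
      funext s'
      rw [hBdef, HDL.Bmap_single]
      have hcs : ¬(s'.castSucc = Fin.last N) := (Fin.castSucc_lt_last s').ne
      by_cases h : s' = s
      · subst h
        have hsucc : s'.succ = Fin.last N := by
          apply Fin.ext
          rw [Fin.val_succ, Fin.val_last]
          omega
        rw [if_neg hcs, if_pos hsucc, Pi.single_eq_same, smul_neg, zero_sub, neg_neg,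
          hsmulmk, mul_one, hαs]
      · have hsucc : ¬(s'.succ = Fin.last N) := by
          intro hcon
          apply h
          apply Fin.ext
          have := congrArg Fin.val hcon
          rw [Fin.val_succ, Fin.val_last] at this
          omega
        rw [if_neg hcs, if_neg hsucc, Pi.single_eq_of_ne h]
        simp
    | succ d ih =>
      intro s hs
      have hslt : (s : ℕ) + 1 < N := by omega
      set s1 : Fin N := ⟨(s : ℕ) + 1, hslt⟩ with hs1def
      set c₀ : Fin (N + 1) := ⟨(s : ℕ) + 1, by omega⟩ with hc₀def
      have hs1val : (s1 : ℕ) = (s : ℕ) + 1 := rfl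
      have hihs1 : Pi.single s1 (mkq (mono (a ↑s1) 0)) ∈ R := ih s1 (by omega)
      have hsns1 : s ≠ s1 := by
        intro hcon
        have := congrArg Fin.val hcon
        omega
      have hkey : Pi.single s (mkq (mono (a ↑s) 0))
          = (X 1 : HDL.Spoly) • (Pi.single s1 (mkq (mono (a ↑s1) 0)) : Fin N → Q)
            - B (Pi.single c₀ (mkq (mono (a ((s : ℕ) + 1)) 0))) := by
        funext s'
        rw [hBdef]
        simp only [Pi.sub_apply, Pi.smul_apply]
        rw [HDL.Bmap_single]
        have hc0val : (c₀ : ℕ) = (s : ℕ) + 1 := rfl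
        by_cases h : s' = s
        · have hv : (s' : ℕ) = (s : ℕ) := congrArg Fin.val h
          have h1 : ¬(s'.castSucc = c₀) := by
            intro hcon
            have := congrArg Fin.val hcon
            rw [Fin.coe_castSucc, hc0val] at this
            omega
          have h2 : s'.succ = c₀ := by
            apply Fin.ext
            rw [Fin.val_succ, hc0val, hv]
          rw [if_neg h1, if_pos h2, h, Pi.single_eq_same, Pi.single_eq_of_ne hsns1,
            smul_zero, zero_sub, zero_sub, neg_neg, hsmulmk, hmonoeq, hmulmono,
            Nat.add_zero, hα]
        · by_cases h0 : s' = s1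
          · have hv : (s' : ℕ) = (s : ℕ) + 1 := by
              rw [h0, hs1val]
            have h1 : s'.castSucc = c₀ := by
              apply Fin.ext
              rw [Fin.coe_castSucc, hc0val, hv]
            have h2 : ¬(s'.succ = c₀) := by
              intro hcon
              have := congrArg Fin.val hcon
              rw [Fin.val_succ, hc0val] at this
              omega
            rw [if_pos h1, if_neg h2, h0, Pi.single_eq_same, Pi.single_eq_of_ne hsns1.symm]
            simp [hs1val]
          · have h1 : ¬(s'.castSucc = c₀) := by
              intro hcon
              apply h0
              apply Fin.ext
              have := congrArg Fin.val hcon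
              rw [Fin.coe_castSucc, hc0val] at this
              rw [this, hs1val]
            have h2 : ¬(s'.succ = c₀) := by
              intro hcon
              apply h
              apply Fin.ext
              have := congrArg Fin.val hcon
              rw [Fin.val_succ, hc0val] at this
              omega
            rw [if_neg h1, if_neg h2, Pi.single_eq_of_ne h, Pi.single_eq_of_ne h0]
            simp
      rw [hkey]
      exact Submodule.sub_mem R (Submodule.smul_mem R _ hihs1) ⟨_, rfl⟩
  have C1' : ∀ s : Fin N, Pi.single s (mkq (mono (a ↑s) 0)) ∈ R := fun s =>
    C1 (N - ((s : ℕ) + 1)) s (by omega)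
  -- the spanning set for the cokernel
  set Efin : Finset (Fin N → Q) :=
    (Finset.univ.sigma fun s : Fin N => Finset.range (a ↑s)).image
      fun p => Pi.single p.1 (mkq (mono p.2 0)) with hEdef
  set T : Submodule ℂ (Fin N → Q) := Submodule.span ℂ (Efin : Set (Fin N → Q)) ⊔ Rc with hTdef
  -- Claim 2 : every monomial vector is in T
  have hRcmem : ∀ x : Fin N → Q, x ∈ R → x ∈ T := by
    intro x hx
    apply Submodule.mem_sup_right
    exact (Submodule.restrictScalars_mem ℂ R x).mpr hx
  have C2 : ∀ (v u : ℕ) (s : Fin N), Pi.single s (mkq (mono u v)) ∈ T := by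
    intro v
    induction v with
    | zero =>
      intro u s
      by_cases hu : u < a ↑s
      · apply Submodule.mem_sup_left
        apply Submodule.subset_span
        rw [Finset.mem_coe, hEdef]
        exact Finset.mem_image.mpr ⟨⟨s, u⟩,
          Finset.mem_sigma.mpr ⟨Finset.mem_univ s, Finset.mem_range.mpr hu⟩, rfl⟩
      · push_neg at hu
        have h2 : mono (u - a ↑s) 0 • (Pi.single s (mkq (mono (a ↑s) 0)) : Fin N → Q)
            = Pi.single s (mkq (mono u 0)) := by
          rw [← Pi.single_smul, hsmulmk, hmulmono, Nat.sub_add_cancel hu, Nat.add_zero]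
        rw [← h2]
        exact hRcmem _ (Submodule.smul_mem R _ (C1' s))
    | succ v ihv =>
      intro u s
      rcases Nat.exists_eq_succ_of_ne_zero (n := (s : ℕ) + 1) (by omega) with ⟨_, _⟩
      by_cases hs0 : (s : ℕ) = 0
      · have hkey : Pi.single s (mkq (mono u (v + 1)))
            = B (Pi.single s.castSucc (mkq (mono u v))) := by
          funext s'
          rw [hBdef, HDL.Bmap_single]
          have hsucc : ¬(s'.succ = s.castSucc) := by
            intro hcon
            have := congrArg Fin.val hcon
            rw [Fin.val_succ, Fin.coe_castSucc] at this
            omega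
          by_cases h : s' = s
          · have h1 : s'.castSucc = s.castSucc := by rw [h]
            rw [if_pos h1, if_neg hsucc, sub_zero, h, Pi.single_eq_same, hsmulmk, hX1mono]
          · have h1 : ¬(s'.castSucc = s.castSucc) :=
              fun hc => h (Fin.castSucc_injective _ hc)
            rw [if_neg h1, if_neg hsucc, Pi.single_eq_of_ne h]
            simp
        rw [hkey]
        exact hRcmem _ ⟨_, rfl⟩
      · obtain ⟨t, ht⟩ := Nat.exists_eq_succ_of_ne_zero hs0
        set s0 : Fin N := ⟨t, by omega⟩ with hs0def
        have hs0val : (s0 : ℕ) = t := rfl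
        have hsval : (s : ℕ) = t + 1 := ht
        have hss0 : s ≠ s0 := by
          intro hcon
          have := congrArg Fin.val hcon
          omega
        have hkey : Pi.single s (mkq (mono u (v + 1)))
            = B (Pi.single s.castSucc (mkq (mono u v)))
              + Pi.single s0 (mkq (mono (α t + u) v)) := by
          funext s'
          rw [hBdef]
          simp only [Pi.add_apply]
          rw [HDL.Bmap_single]
          by_cases h : s' = s
          · have hv' : (s' : ℕ) = t + 1 := by rw [h, hsval]
            have h1 : s'.castSucc = s.castSucc := by rw [h]
            have h2 : ¬(s'.succ = s.castSucc) := by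
              intro hcon
              have := congrArg Fin.val hcon
              rw [Fin.val_succ, Fin.coe_castSucc] at this
              omega
            have h3 : s' ≠ s0 := by
              intro hcon
              have := congrArg Fin.val hcon
              omega
            rw [if_pos h1, if_neg h2, sub_zero, h, Pi.single_eq_same,
              Pi.single_eq_of_ne (h ▸ h3 : s ≠ s0), hsmulmk, hX1mono, add_zero]
          · by_cases h0 : s' = s0
            · have hv' : (s' : ℕ) = t := by rw [h0]
              have h1 : ¬(s'.castSucc = s.castSucc) :=
                fun hc => h (Fin.castSucc_injective _ hc)
              have h2 : s'.succ = s.castSucc := by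
                apply Fin.ext
                rw [Fin.val_succ, Fin.coe_castSucc, hv', hsval]
              have hαs' : α ↑s' = α t := by rw [hv']
              rw [if_neg h1, if_pos h2, zero_sub, h0, Pi.single_eq_of_ne hss0.symm,
                Pi.single_eq_same, hsmulmk, hmonoeq, hmulmono, Nat.zero_add]
              have : α ↑s0 = α t := by rw [hs0val]
              rw [this, neg_add_cancel]
            · have h1 : ¬(s'.castSucc = s.castSucc) :=
                fun hc => h (Fin.castSucc_injective _ hc)
              have h2 : ¬(s'.succ = s.castSucc) := by
                intro hcon
                apply h0
                apply Fin.ext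
                have := congrArg Fin.val hcon
                rw [Fin.val_succ, Fin.coe_castSucc, hsval] at this
                omega
              rw [if_neg h1, if_neg h2, Pi.single_eq_of_ne h, Pi.single_eq_of_ne h0]
              simp
        rw [hkey]
        exact Submodule.add_mem T (hRcmem _ ⟨_, rfl⟩) (ihv (α t + u) s0)
  -- Claim 3 : T = ⊤
  have C3 : T = ⊤ := by
    rw [eq_top_iff]
    intro w _
    have hw : w = ∑ s : Fin N, Pi.single s (w s) := (Finset.univ_sum_single w).symm
    rw [hw]
    apply Submodule.sum_mem
    intro s _
    obtain ⟨p, hpw⟩ : ∃ p, mkq p = w s := Ideal.Quotient.mk_surjective (w s)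
    rw [← hpw]
    set Ls : HDL.Spoly →ₗ[ℂ] (Fin N → Q) :=
      (LinearMap.single ℂ (fun _ : Fin N => Q) s).comp
        (Ideal.Quotient.mkₐ ℂ J').toLinearMap with hLsdef
    have hLs : ∀ x : HDL.Spoly, Ls x = Pi.single s (mkq x) := fun x => rfl
    rw [← hLs]
    have hp : p = ∑ m ∈ p.support, monomial m (coeff m p) := (support_sum_monomial_coeff p).symm
    rw [hp, map_sum]
    apply Submodule.sum_mem
    intro m _
    have hsm : Ls (monomial m (coeff m p)) = coeff m p • Ls (monomial m 1) := by
      rw [← map_smul]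
      congr 1
      rw [smul_monomial, smul_eq_mul, mul_one]
    rw [hsm]
    apply Submodule.smul_mem
    have hmono2 : Ls (monomial m 1) = Pi.single s (mkq (mono (m 0) (m 1))) := by
      rw [hLs, hmonodef]
      dsimp only
      rw [HDL.ee_eq_self]
    rw [hmono2]
    exact C2 (m 1) (m 0) s
  -- dimension bookkeeping
  haveI : Module.Finite ℂ Q := hfl'
  set Bc : (Fin (N + 1) → Q) →ₗ[ℂ] (Fin N → Q) := B.restrictScalars ℂ with hBcdef
  have hrangeBc : LinearMap.range Bc = Rc := by
    ext x
    simp only [LinearMap.mem_range, hRcdef, Submodule.restrictScalars_mem, hRdef]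
    rfl
  -- the evaluation map on Hom(J, Q), and its injectivity
  set gg : Fin (N + 1) → J := fun t => ⟨monomial (HDL.ee (a ↑t) ↑t) 1, ha ↑t⟩ with hggdef
  set ev : (J →ₗ[HDL.Spoly] Q) →ₗ[ℂ] (Fin (N + 1) → Q) :=
    { toFun := fun φ => fun t => φ (gg t)
      map_add' := fun φ ψ => rfl
      map_smul' := fun c φ => rfl } with hevdef
  have hggrel : ∀ s : Fin N, (X 1 : HDL.Spoly) • gg s.castSucc = (mono (α ↑s) 0) • gg s.succ := by
    intro s
    apply Subtype.ext
    show (X 1 : HDL.Spoly) * monomial (HDL.ee (a ↑s.castSucc) ↑s.castSucc) 1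
        = mono (α ↑s) 0 * monomial (HDL.ee (a ↑s.succ) ↑s.succ) 1
    rw [Fin.coe_castSucc, Fin.val_succ, hmonoeq, hmonoeq, hX1mono, hmulmono,
      Nat.zero_add, hα]
  have hevker : ∀ φ, ev φ ∈ LinearMap.ker Bc := by
    intro φ
    rw [LinearMap.mem_ker]
    funext s
    show (X 1 : HDL.Spoly) • φ (gg s.castSucc)
        - (monomial (HDL.ee (α ↑s) 0) 1 : HDL.Spoly) • φ (gg s.succ) = 0
    rw [hmonoeq, ← map_smul φ, ← map_smul φ, hggrel s, sub_self]
  have hevinj : Function.Injective ev := by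
    have hzero : ∀ φ : J →ₗ[HDL.Spoly] Q, ev φ = 0 → φ = 0 := by
      intro φ h0
      ext x
      obtain ⟨x, hx⟩ := x
      have key : ∀ (y : HDL.Spoly) (hy : y ∈ Ideal.span ((fun d => (monomial d (1 : ℂ) : HDL.Spoly)) ''
          (Set.range fun t : Fin (N + 1) => HDL.ee (a ↑t) ↑t))), ∀ h : y ∈ J, φ ⟨y, h⟩ = 0 := by
        intro y hy
        refine Submodule.span_induction ?_ ?_ ?_ ?_ hy
        · rintro x ⟨d, ⟨t, rfl⟩, rfl⟩ h
          have heq : (⟨monomial (HDL.ee (a ↑t) ↑t) 1, h⟩ : J) = gg t := rfl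
          rw [heq]
          exact congrFun h0 t
        · intro h
          have heq : (⟨(0 : HDL.Spoly), h⟩ : J) = 0 := rfl
          rw [heq, map_zero]
        · intro x y hxs hys px py h
          have hxJ : x ∈ J := by rw [hspan]; exact hxs
          have hyJ : y ∈ J := by rw [hspan]; exact hys
          have heq : (⟨x + y, h⟩ : J) = ⟨x, hxJ⟩ + ⟨y, hyJ⟩ := rfl
          rw [heq, map_add, px hxJ, py hyJ, add_zero]
        · intro c x hxs px h
          have hxJ : x ∈ J := by rw [hspan]; exact hxs
          have heq : (⟨c • x, h⟩ : J) = c • (⟨x, hxJ⟩ : J) := rfl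
          rw [heq, map_smul, px hxJ, smul_zero]
      exact key x (by rw [← hspan]; exact hx) hx
    intro φ ψ h
    have := hzero (φ - ψ) (by rw [map_sub, h, sub_self])
    rw [sub_eq_zero] at this
    exact this
  have hHomle : Module.finrank ℂ (J →ₗ[MvPolynomial (Fin 2) ℂ] (MvPolynomial (Fin 2) ℂ ⧸ J'))
      ≤ Module.finrank ℂ ↥(LinearMap.ker Bc) := by
    have hinj2 : Function.Injective (LinearMap.codRestrict (LinearMap.ker Bc) ev hevker) := by
      intro x y h
      apply hevinj
      have := congrArg (Subtype.val) h
      simpa using this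
    exact LinearMap.finrank_le_finrank_of_injective hinj2
  -- rank-nullity bookkeeping
  have hpi1 : Module.finrank ℂ (Fin (N + 1) → Q) = (N + 1) * l' := by
    rw [Module.finrank_pi_fintype ℂ, Finset.sum_const, Finset.card_univ, Fintype.card_fin,
      smul_eq_mul, hl']
  have hpi2 : Module.finrank ℂ (Fin N → Q) = N * l' := by
    rw [Module.finrank_pi_fintype ℂ, Finset.sum_const, Finset.card_univ, Fintype.card_fin,
      smul_eq_mul, hl']
  have hrk : Module.finrank ℂ ↥(LinearMap.range Bc) + Module.finrank ℂ ↥(LinearMap.ker Bc)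
      = (N + 1) * l' := by
    rw [← hpi1]
    exact LinearMap.finrank_range_add_finrank_ker Bc
  have hq : Module.finrank ℂ ((Fin N → Q) ⧸ Rc) + Module.finrank ℂ ↥Rc = N * l' := by
    rw [← hpi2]
    exact Submodule.finrank_quotient_add_finrank Rc
  -- the cokernel has dimension at most ∑ a s
  have hcoker : Module.finrank ℂ ((Fin N → Q) ⧸ Rc) ≤ ∑ s : Fin N, a ↑s := by
    have h2 : Submodule.map Rc.mkQ Rc = ⊥ := by
      rw [eq_bot_iff]
      rintro x ⟨y, hy, rfl⟩
      simp only [Submodule.mkQ_apply, Submodule.mem_bot, Submodule.Quotient.mk_eq_zero]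
      exact hy
    have h1 : Submodule.span ℂ ((Efin.image Rc.mkQ : Finset _) : Set ((Fin N → Q) ⧸ Rc)) = ⊤ := by
      have hmap : Submodule.map Rc.mkQ T = ⊤ := by
        rw [C3, Submodule.map_top, Submodule.range_mkQ]
      rw [hTdef, Submodule.map_sup, h2, sup_bot_eq, Submodule.map_span] at hmap
      rw [Finset.coe_image]
      exact hmap
    have h3 := finrank_span_finset_le_card (R := ℂ) (Efin.image Rc.mkQ)
    rw [Set.finrank, h1] at h3
    calc Module.finrank ℂ ((Fin N → Q) ⧸ Rc)
        = Module.finrank ℂ ↥(⊤ : Submodule ℂ ((Fin N → Q) ⧸ Rc)) := (finrank_top ℂ _).symm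
      _ ≤ (Efin.image Rc.mkQ).card := h3
      _ ≤ Efin.card := Finset.card_image_le
      _ ≤ ((Finset.univ.sigma fun s : Fin N => Finset.range (a ↑s))).card := by
          rw [hEdef]; exact Finset.card_image_le
      _ = ∑ s : Fin N, a ↑s := by
          rw [Finset.card_sigma]
          simp [Finset.card_range]
  -- ∑ a s ≤ l
  have hsuml : (∑ s : Fin N, a ↑s) ≤ l := by
    haveI : Module.Finite ℂ (HDL.Spoly ⧸ J) := hfl
    set Dfin : Finset (Fin 2 →₀ ℕ) :=
      (Finset.univ.sigma fun s : Fin N => Finset.range (a ↑s)).image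
        (fun p => HDL.ee p.2 ↑p.1) with hDdef
    have hinj : Set.InjOn (fun p : (_ : Fin N) × ℕ => HDL.ee p.2 ↑p.1)
        ↑(Finset.univ.sigma fun s : Fin N => Finset.range (a ↑s)) := by
      rintro ⟨ps, pu⟩ _ ⟨qs, qu⟩ _ h
      have h0 := congrArg (fun f : Fin 2 →₀ ℕ => f 0) h
      have h1 := congrArg (fun f : Fin 2 →₀ ℕ => f 1) h
      simp only [HDL.ee_apply0] at h0
      simp only [HDL.ee_apply1] at h1
      have hps : ps = qs := Fin.ext h1
      subst hps
      rw [h0]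
    have hcard : Dfin.card = ∑ s : Fin N, a ↑s := by
      rw [hDdef, Finset.card_image_of_injOn hinj, Finset.card_sigma]
      simp [Finset.card_range]
    have hle := HDL.card_le_finrank hJ Dfin ?_
    · rw [hcard] at hle
      calc (∑ s : Fin N, a ↑s) ≤ Module.finrank ℂ (HDL.Spoly ⧸ J) := hle
        _ = l := hl
    · intro d hd
      rw [hDdef] at hd
      obtain ⟨p, hp, rfl⟩ := Finset.mem_image.mp hd
      rw [Finset.mem_sigma] at hp
      exact hamin ↑p.1 p.2 (Finset.mem_range.mp hp.2)
  -- final arithmetic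
  rw [hrangeBc] at hrk
  have hNl : (N + 1) * l' = N * l' + l' := by ring
  omega
end

section
/- For k ≥ 1 and 0 ≤ m₁ ≤ k with C(m₁+2,3) ≤ C(k+2,3), we have (2m₁+1)·C(k+2,3) − 2·C(m₁+2,4) ≤ C(k+2,2)·C(k+1,2), with equality if and only if m₁ = k. -/
lemma c2' (n : ℕ) : 2 * (n+1).choose 2 = (n+1)*n := by
  induction n with
  | zero => simp
  | succ n ih =>
    rw [show n+2 = (n+1)+1 from rfl, Nat.choose_succ_succ]
    rw [Nat.mul_add, ih, Nat.choose_one_right]; ring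

lemma c3' (n : ℕ) : 6 * (n+2).choose 3 = (n+2)*(n+1)*n := by
  induction n with
  | zero => simp
  | succ n ih =>
    rw [show n+3 = (n+2)+1 from rfl, Nat.choose_succ_succ]
    rw [Nat.mul_add, ih, show (6:ℕ) = 3*2 from rfl, Nat.mul_assoc, c2']; ring

lemma c4' (n : ℕ) : 24 * (n+3).choose 4 = (n+3)*(n+2)*(n+1)*n := by
  induction n with
  | zero => simp
  | succ n ih =>
    rw [show n+4 = (n+3)+1 from rfl, Nat.choose_succ_succ]
    rw [Nat.mul_add, ih, show (24:ℕ) = 4*6 from rfl, Nat.mul_assoc, c3']; ring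

lemma gk_eq (k : ℕ) (hk : 1 ≤ k) :
    (2 * (k : ℤ) + 1) * ((k + 2).choose 3 : ℤ) - 2 * ((k + 2).choose 4 : ℤ)
      = ((k + 2).choose 2 : ℤ) * ((k + 1).choose 2 : ℤ) := by
  obtain ⟨n, rfl⟩ := Nat.exists_eq_add_of_le hk
  simp only [show 1+n+2 = n+3 from by omega, show 1+n+1 = n+2 from by omega]
  have h2z : (2:ℤ) * ((n+2).choose 2 : ℤ) = ((n:ℤ)+2)*((n:ℤ)+1) := by
    exact_mod_cast congrArg (Nat.cast : ℕ → ℤ) (c2' (n+1))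
  have h2z' : (2:ℤ) * ((n+3).choose 2 : ℤ) = ((n:ℤ)+3)*((n:ℤ)+2) := by
    exact_mod_cast congrArg (Nat.cast : ℕ → ℤ) (c2' (n+2))
  have h3z : (6:ℤ) * ((n+3).choose 3 : ℤ) = ((n:ℤ)+3)*((n:ℤ)+2)*((n:ℤ)+1) := by
    exact_mod_cast congrArg (Nat.cast : ℕ → ℤ) (c3' (n+1))
  have h4z : (24:ℤ) * ((n+3).choose 4 : ℤ) = ((n:ℤ)+3)*((n:ℤ)+2)*((n:ℤ)+1)*(n:ℤ) := by
    exact_mod_cast congrArg (Nat.cast : ℕ → ℤ) (c4' n)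
  have hprod : ((2:ℤ) * ((n+3).choose 2 : ℤ)) * ((2:ℤ) * ((n+2).choose 2 : ℤ))
      = (((n:ℤ)+3)*((n:ℤ)+2)) * (((n:ℤ)+2)*((n:ℤ)+1)) := by rw [h2z', h2z]
  have h24 : (24:ℤ) * ((2 * ((1+n:ℕ) : ℤ) + 1) * ((n+3).choose 3 : ℤ)
        - 2 * ((n+3).choose 4 : ℤ))
      = 24 * (((n+3).choose 2 : ℤ) * ((n+2).choose 2 : ℤ)) := by
    push_cast
    linear_combination (4*(2*(n:ℤ)+3)) * h3z - 2 * h4z - 6 * hprod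
  exact mul_left_cancel₀ (by norm_num : (24:ℤ) ≠ 0) h24

/-- For `k ≥ 1`, `0 ≤ m₁ ≤ k` with `C(m₁+2,3) ≤ C(k+2,3)`:
`(2m₁+1)·C(k+2,3) − 2·C(m₁+2,4) ≤ C(k+2,2)·C(k+1,2)`,
with equality if and only if `m₁ = k`. -/
theorem psi_le_with_equality_iff (k m₁ : ℕ) (hk : 1 ≤ k) (hm : m₁ ≤ k)
    (hdom : (m₁ + 2).choose 3 ≤ (k + 2).choose 3) :
    ((2 * (m₁ : ℤ) + 1) * ((k + 2).choose 3 : ℤ) - 2 * ((m₁ + 2).choose 4 : ℤ)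
        ≤ ((k + 2).choose 2 : ℤ) * ((k + 1).choose 2 : ℤ))
    ∧ ((2 * (m₁ : ℤ) + 1) * ((k + 2).choose 3 : ℤ) - 2 * ((m₁ + 2).choose 4 : ℤ)
        = ((k + 2).choose 2 : ℤ) * ((k + 1).choose 2 : ℤ) ↔ m₁ = k) := by
  set g : ℕ → ℤ := fun m =>
    (2 * (m : ℤ) + 1) * ((k + 2).choose 3 : ℤ) - 2 * ((m + 2).choose 4 : ℤ) with hg
  -- step lemma
  have step : ∀ m, m < k → g m < g (m + 1) := by
    intro m hmk
    have pascal : ((m + 3).choose 4 : ℤ) = ((m+2).choose 3 : ℤ) + ((m+2).choose 4 : ℤ) := by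
      exact_mod_cast (Nat.choose_succ_succ (m+2) 3)
    have hlt : (m+2).choose 3 < (k+2).choose 3 := by
      have h1 : (m+3).choose 3 = (m+2).choose 2 + (m+2).choose 3 := Nat.choose_succ_succ (m+2) 2
      have h2 : 0 < (m+2).choose 2 := Nat.choose_pos (by omega)
      have h3 : (m+3).choose 3 ≤ (k+2).choose 3 := Nat.choose_le_choose 3 (by omega)
      omega
    have hltz : ((m+2).choose 3 : ℤ) < ((k+2).choose 3 : ℤ) := by exact_mod_cast hlt
    simp only [hg]
    push_cast [show m+1+2 = m+3 from rfl]
    rw [pascal]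
    linarith
  have key : ∀ d m, m + d ≤ k → g m ≤ g (m + d) ∧ (d ≠ 0 → g m < g (m + d)) := by
    intro d
    induction d with
    | zero => intro m _; simp
    | succ d ih =>
      intro m hmd
      have h1 : g m < g (m + 1) := step m (by omega)
      have h2 := ih (m+1) (by omega)
      have : m + (d+1) = (m+1) + d := by ring
      rw [this]
      exact ⟨le_of_lt (lt_of_lt_of_le h1 h2.1), fun _ => lt_of_lt_of_le h1 h2.1⟩
  have hke := gk_eq k hk
  have hgk : g k = ((k + 2).choose 2 : ℤ) * ((k + 1).choose 2 : ℤ) := hke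
  have hmain := key (k - m₁) m₁ (by omega)
  rw [show m₁ + (k - m₁) = k from by omega] at hmain
  constructor
  · exact hgk ▸ hmain.1
  · constructor
    · intro heq
      by_contra hne
      have := hmain.2 (by omega)
      rw [hgk] at this
      exact absurd heq (ne_of_lt this)
    · intro h; subst h; exact hgk
end

section
/- Let Ĩ ⊆ ℕ³ be a Borel-fixed upward-closed set with finite complement, decomposed by x-degree as slices Ĩ_i = {(b,c) : (i,b,c) ∈ Ĩ} ⊆ ℕ², for 0 ≤ i ≤ m₁ where m₁ is minimal with (m₁,0,0) ∈ Ĩ. Then for 0 ≤ i < j ≤ m₁, every lattice point (b,c) with b + c ≤ j − i − 1 satisfies: (b, c + h_j) ∉ Ĩ_i, where h_j is the height of Ĩ_j (minimal n with (0,n) ∈ Ĩ_j). Consequently t(I_i, I_j) ≥ C(j−i+1, 2). -/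
/-!
The Borel moves y → x and z → x push a point `(i, b, c + h_j)` of the `i`-th slice
to `(i + b + c, 0, h_j)`, and one more move to `(i + b + c + 1, 0, h_j - 1)`. When
`i + b + c < j`, upward closure then puts `(j, 0, h_j - 1)` in `Ĩ`, contradicting the minimality of
`h_j` (for `h_j = 0` the point `(i + b + c, 0, 0)` contradicts the minimality of `m₁` instead).
The points excluded this way, shifted down by `h_j`, fill the triangle `b + c ≤ j − i − 1`.
-/

open Finset

def triangle (k : ℕ) : Finset (ℕ × ℕ) := (range (k + 1)).biUnion antidiagonal

@[simp] lemma mem_triangle {k : ℕ} {p : ℕ × ℕ} : p ∈ triangle k ↔ p.1 + p.2 ≤ k := by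
  simp [triangle]

lemma card_triangle (k : ℕ) : #(triangle k) = (k + 2).choose 2 := by
  rw [triangle, card_biUnion fun a _ b _ hab => disjoint_left.2 fun p hp hq =>
    hab ((mem_antidiagonal.1 hp).symm.trans (mem_antidiagonal.1 hq))]
  simp only [Nat.card_antidiagonal]
  induction k with
  | zero => simp
  | succ k ih =>
    rw [sum_range_succ, ih, Nat.choose_succ_succ' (k + 2) 1, Nat.choose_one_right, Nat.add_comm]

section BorelMoves

variable {S : Set (ℕ × ℕ × ℕ)}

lemma mem_shift_y_to_x
    (hb3 : ∀ γ ∈ S, 1 ≤ γ.2.1 → (γ.1 + 1, γ.2.1 - 1, γ.2.2) ∈ S) :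
    ∀ {x b c : ℕ}, (x, b, c) ∈ S → (x + b, 0, c) ∈ S
  | _, 0, _, h => h
  | x, b + 1, c, h => by
    simpa [Nat.add_right_comm, Nat.add_assoc] using
      mem_shift_y_to_x hb3 (hb3 _ h (Nat.le_add_left 1 b))

lemma mem_shift_z_to_x
    (hb2 : ∀ γ ∈ S, 1 ≤ γ.2.2 → (γ.1 + 1, γ.2.1, γ.2.2 - 1) ∈ S) :
    ∀ {x c d : ℕ}, (x, 0, c + d) ∈ S → (x + d, 0, c) ∈ S
  | _, _, 0, h => h
  | x, c, d + 1, h => by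
    simpa [Nat.add_right_comm, Nat.add_assoc] using
      mem_shift_z_to_x hb2 (hb2 _ h (Nat.le_add_left 1 (c + d)))

lemma notMem_slice_above_height
    (hup : ∀ γ ∈ S, ∀ δ : ℕ × ℕ × ℕ, γ.1 ≤ δ.1 → γ.2.1 ≤ δ.2.1 → γ.2.2 ≤ δ.2.2 → δ ∈ S)
    (hb2 : ∀ γ ∈ S, 1 ≤ γ.2.2 → (γ.1 + 1, γ.2.1, γ.2.2 - 1) ∈ S)
    (hb3 : ∀ γ ∈ S, 1 ≤ γ.2.1 → (γ.1 + 1, γ.2.1 - 1, γ.2.2) ∈ S)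
    {m₁ j hj : ℕ} (hm₁min : ∀ m < m₁, (m, 0, 0) ∉ S) (hjm : j ≤ m₁)
    (hhjmin : ∀ n < hj, (j, 0, n) ∉ S) {i b c : ℕ} (hlt : i + b + c < j) :
    (i, b, c + hj) ∉ S := by
  intro h
  have hpushed : (i + b + c, 0, hj) ∈ S :=
    mem_shift_z_to_x hb2 (mem_shift_y_to_x hb3 (by rwa [Nat.add_comm hj c]))
  rcases Nat.eq_zero_or_pos hj with rfl | hpos
  · exact hm₁min _ (by omega) hpushed
  · exact hhjmin (hj - 1) (by omega) (hup _ (hb2 _ hpushed hpos) _ hlt le_rfl le_rfl)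

end BorelMoves

lemma finite_slice_compl {S : Set (ℕ × ℕ × ℕ)} (hfin : Sᶜ.Finite) (i : ℕ) :
    {β : ℕ × ℕ | (i, β.1, β.2) ∉ S}.Finite :=
  hfin.preimage fun _ _ _ _ h => by simpa using h

theorem t_lower_bound_general (S : Set (ℕ × ℕ × ℕ))
    (hup : ∀ γ ∈ S, ∀ δ : ℕ × ℕ × ℕ, γ.1 ≤ δ.1 → γ.2.1 ≤ δ.2.1 → γ.2.2 ≤ δ.2.2 → δ ∈ S)
    (hfin : Sᶜ.Finite)
    (hb2 : ∀ γ ∈ S, 1 ≤ γ.2.2 → (γ.1 + 1, γ.2.1, γ.2.2 - 1) ∈ S)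
    (hb3 : ∀ γ ∈ S, 1 ≤ γ.2.1 → (γ.1 + 1, γ.2.1 - 1, γ.2.2) ∈ S)
    (m₁ : ℕ) (hm₁min : ∀ m < m₁, (m, 0, 0) ∉ S)
    (i j : ℕ) (hij : i < j) (hjm : j ≤ m₁)
    (hj : ℕ) (hhjmin : ∀ n < hj, (j, 0, n) ∉ S) :
    (∀ b c : ℕ, b + c ≤ j - i - 1 → (i, b, c + hj) ∉ S)
    ∧ (j - i + 1).choose 2
        ≤ Set.ncard {β : ℕ × ℕ | (i, β.1, β.2) ∉ S ∧ hj ≤ β.2} := by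
  have key : ∀ b c : ℕ, b + c ≤ j - i - 1 → (i, b, c + hj) ∉ S := fun b c hbc =>
    notMem_slice_above_height hup hb2 hb3 hm₁min hjm hhjmin (by omega)
  refine ⟨key, ?_⟩
  let shift : ℕ × ℕ → ℕ × ℕ := fun p => (p.1, p.2 + hj)
  have hshift : shift.Injective := fun p q h => by
    simp only [shift, Prod.ext_iff, Nat.add_right_cancel_iff] at h
    exact Prod.ext h.1 h.2
  calc (j - i + 1).choose 2 = #(triangle (j - i - 1)) := by
        rw [card_triangle]; congr 1; omega
    _ = (shift '' triangle (j - i - 1)).ncard :=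
        (Set.ncard_image_of_injective _ hshift).trans (Set.ncard_coe_finset _) |>.symm
    _ ≤ _ := by
        refine Set.ncard_le_ncard ?_ ((finite_slice_compl hfin i).subset fun β hβ => hβ.1)
        rintro _ ⟨p, hp, rfl⟩
        exact ⟨key p.1 p.2 (mem_triangle.1 hp), Nat.le_add_left hj p.2⟩

/-- Corollary 3.2: for a Borel-fixed staircase `S ⊆ ℕ³` with slices
`Ĩ_i = {(b,c) : (i,b,c) ∈ S}`, minimal pure exponent `m₁`, and `0 ≤ i < j ≤ m₁`,
every lattice point `(b,c)` with `b + c ≤ j − i − 1` satisfies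
`(b, c + h_j) ∉ Ĩ_i`, where `h_j` is the height of `Ĩ_j`;
consequently `t(I_i, I_j) ≥ C(j−i+1, 2)`. -/
theorem t_lower_bound (S : Set (ℕ × ℕ × ℕ))
    (hup : ∀ γ ∈ S, ∀ δ : ℕ × ℕ × ℕ, γ.1 ≤ δ.1 → γ.2.1 ≤ δ.2.1 → γ.2.2 ≤ δ.2.2 → δ ∈ S)
    (hfin : Sᶜ.Finite)
    (hb1 : ∀ γ ∈ S, 1 ≤ γ.2.2 → (γ.1, γ.2.1 + 1, γ.2.2 - 1) ∈ S)
    (hb2 : ∀ γ ∈ S, 1 ≤ γ.2.2 → (γ.1 + 1, γ.2.1, γ.2.2 - 1) ∈ S)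
    (hb3 : ∀ γ ∈ S, 1 ≤ γ.2.1 → (γ.1 + 1, γ.2.1 - 1, γ.2.2) ∈ S)
    (m₁ : ℕ) (hm₁ : (m₁, 0, 0) ∈ S) (hm₁min : ∀ m < m₁, (m, 0, 0) ∉ S)
    (i j : ℕ) (hij : i < j) (hjm : j ≤ m₁)
    (hj : ℕ) (hhj : (j, 0, hj) ∈ S) (hhjmin : ∀ n < hj, (j, 0, n) ∉ S) :
    (∀ b c : ℕ, b + c ≤ j - i - 1 → (i, b, c + hj) ∉ S)
    ∧ (j - i + 1).choose 2
        ≤ Set.ncard {β : ℕ × ℕ | (i, β.1, β.2) ∉ S ∧ hj ≤ β.2} :=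
  t_lower_bound_general S hup hfin hb2 hb3 m₁ hm₁min i j hij hjm hj hhjmin
end

section
/- Let J̃, J̃' ⊆ ℕ² be staircases (upward-closed, finite complements of sizes l and l'). There is a bijection between ℕ² \ J̃' and the set A_p of pairs (U, α) with α ∈ ℤ × ℕ (i.e., α_z ≥ 0) and U a bounded connected component of (J̃ + α) \ J̃', where connectivity is with respect to unit horizontal/vertical adjacency in ℤ². -/
/-- The lift of a subset of `ℕ²` to `ℤ²`. -/
def liftN (J : Set (ℕ × ℕ)) : Set (ℤ × ℤ) :=
  {p | 0 ≤ p.1 ∧ 0 ≤ p.2 ∧ (p.1.toNat, p.2.toNat) ∈ J}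

/-- One adjacency step inside a set `T ⊆ ℤ²` (unit horizontal/vertical moves). -/
def Step (T : Set (ℤ × ℤ)) (a b : ℤ × ℤ) : Prop :=
  a ∈ T ∧ b ∈ T ∧ (a.1 - b.1).natAbs + (a.2 - b.2).natAbs = 1

/-- `U` is a connected component of `T ⊆ ℤ²` under unit edge-adjacency. -/
def IsComponent (T U : Set (ℤ × ℤ)) : Prop :=
  ∃ p ∈ T, U = {q | Relation.ReflTransGen (Step T) p q}

/-- The set `(J̃ + α) \ J̃'` inside `ℤ²`. -/
def TransDiff (J J' : Set (ℕ × ℕ)) (α : ℤ × ℤ) : Set (ℤ × ℤ) :=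
  {p | (p.1 - α.1, p.2 - α.2) ∈ liftN J ∧ p ∉ liftN J'}

/-
A bounded component `U` of `(J̃ + α) \ J̃'` lies in the right half-plane, since from a point in a
negative column the whole vertical ray upwards stays in `(J̃ + α) \ J̃'`. So `U ⊆ ℕ² \ J̃'` has a
leftmost column `y`; climbing it, `U` contains the top `(y, c)` of column `y` of `ℕ² \ J̃'`, and
`(y - 1, c) ∉ J̃ + α` because `U` does not reach column `y - 1`. Conversely, for `(y, b) ∉ J̃'`
there is exactly one `a` with `(y, c) ∈ J̃ + (a, b) ∌ (y - 1, c)`, and for it no point of column `y`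
of `(J̃ + (a, b)) \ J̃'` has a left neighbour there, so the component of `(y, c)` stays in columns
`≥ y`, hence inside the finite set `ℕ² \ J̃'`. Thus `(U, α) ↦ (y, α_z)` is the bijection.
-/

def componentOf (T : Set (ℤ × ℤ)) (p : ℤ × ℤ) : Set (ℤ × ℤ) :=
  {q | Relation.ReflTransGen (Step T) p q}

instance (T : Set (ℤ × ℤ)) : Std.Symm (Step T) :=
  ⟨fun _ _ ⟨ha, hb, h⟩ => ⟨hb, ha, by omega⟩⟩

section Components

variable {T : Set (ℤ × ℤ)} {p q : ℤ × ℤ}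

lemma mem_of_mem_componentOf (hp : p ∈ T) (hq : q ∈ componentOf T p) : q ∈ T := by
  induction hq with
  | refl => exact hp
  | tail _ h _ => exact h.2.1

lemma componentOf_eq_of_mem (hq : q ∈ componentOf T p) : componentOf T q = componentOf T p := by
  ext r
  exact ⟨Relation.ReflTransGen.trans hq,
    (Std.Symm.symm (r := Relation.ReflTransGen (Step T)) _ _ hq).trans⟩

lemma mem_componentOf_of_segment {x z z' : ℤ} (hzz' : z ≤ z')
    (h : ∀ w, z ≤ w → w ≤ z' → (x, w) ∈ T) : (x, z') ∈ componentOf T (x, z) := by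
  induction z', hzz' using Int.leInduction with
  | base => exact .refl
  | succ w hzw ih =>
    exact Relation.ReflTransGen.tail (ih fun v h₁ h₂ => h v h₁ (by omega))
      ⟨h w hzw (by omega), h (w + 1) (by omega) le_rfl, by simp⟩

lemma le_fst_of_mem_componentOf {m : ℤ} (hcross : ∀ w, (m, w) ∈ T → (m - 1, w) ∉ T)
    (hp : m ≤ p.1) (hq : q ∈ componentOf T p) : m ≤ q.1 := by
  induction hq with
  | refl => exact hp
  | @tail r s _ hrs ih =>
    obtain ⟨x, w⟩ := r
    obtain ⟨x', w'⟩ := s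
    obtain ⟨hr, hs, hd⟩ := hrs
    by_contra! hlt
    obtain ⟨rfl, rfl, rfl⟩ : x = m ∧ x' = m - 1 ∧ w' = w := by
      simp only at hd hlt ih; omega
    exact hcross _ hr hs

end Components

section Staircases

variable {J J' : Set (ℕ × ℕ)}

@[simp] lemma natCast_mem_liftN {x z : ℕ} : ((x : ℤ), (z : ℤ)) ∈ liftN J ↔ (x, z) ∈ J := by
  simp [liftN]

lemma notMem_liftN_of_fst_neg {p : ℤ × ℤ} (h : p.1 < 0) : p ∉ liftN J :=
  fun hp => by have := hp.1; omega

lemma isUpperSet_liftN (hJ : IsUpperSet J) : IsUpperSet (liftN J) := by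
  rintro ⟨x, z⟩ ⟨x', z'⟩ hle ⟨hx, hz, hmem⟩
  rw [Prod.mk_le_mk] at hle
  exact ⟨by omega, by omega, hJ (Prod.mk_le_mk.2 ⟨by simp; omega, by simp; omega⟩) hmem⟩

lemma le_of_mem_of_notMem_sub_one {S : Set (ℤ × ℤ)} (hS : IsUpperSet S) {x z a a' : ℤ}
    (h : (x - a, z) ∈ S) (h' : (x - 1 - a', z) ∉ S) : a ≤ a' := by
  by_contra! hlt
  exact h' (hS (Prod.mk_le_mk.2 ⟨by omega, le_rfl⟩) h)

lemma exists_mem_liftN_notMem_sub_one (hfinJ : Jᶜ.Finite) (x : ℤ) {z : ℤ} (hz : 0 ≤ z) :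
    ∃ a, (x - a, z) ∈ liftN J ∧ (x - 1 - a, z) ∉ liftN J := by
  lift z to ℕ using hz
  have hrow : ∃ n, (n, z) ∈ J := by
    by_contra! h
    exact Set.infinite_range_of_injective (fun _ _ h => (Prod.mk.inj h).1)
      |>.mono (Set.range_subset_iff.2 h) |>.elim hfinJ
  classical
  refine ⟨x - Nat.find hrow, by simpa using Nat.find_spec hrow, ?_⟩
  rintro ⟨hx, -, hmem⟩
  simp only at hx hmem
  refine Nat.find_min hrow (m := Nat.find hrow - 1) (by omega) ?_
  convert hmem using 2 <;> omega

noncomputable def colTop (J' : Set (ℕ × ℕ)) (y : ℕ) : ℕ :=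
  sSup {z | (y, z) ∉ J'}

lemma finite_column (hfinJ' : J'ᶜ.Finite) (y : ℕ) : {z | (y, z) ∉ J'}.Finite :=
  hfinJ'.preimage (Prod.mk_right_injective y).injOn

lemma le_colTop (hfinJ' : J'ᶜ.Finite) {y z : ℕ} (h : (y, z) ∉ J') : z ≤ colTop J' y :=
  le_csSup (finite_column hfinJ' y).bddAbove h

lemma colTop_notMem (hfinJ' : J'ᶜ.Finite) {y z : ℕ} (h : (y, z) ∉ J') :
    (y, colTop J' y) ∉ J' :=
  Nat.sSup_mem ⟨z, h⟩ (finite_column hfinJ' y).bddAbove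

/-- With `c` the top of column `y` of `ℕ² \ J̃'`: `(y, c) ∈ J̃ + (a, b)` but
`(y - 1, c) ∉ J̃ + (a, b)`. -/
def IsLeftShift (J J' : Set (ℕ × ℕ)) (y b : ℕ) (a : ℤ) : Prop :=
  ((y : ℤ) - a, (colTop J' y : ℤ) - b) ∈ liftN J ∧
    ((y : ℤ) - 1 - a, (colTop J' y : ℤ) - b) ∉ liftN J

lemma IsLeftShift.eq (hJ : IsUpperSet J) {y b : ℕ} {a a' : ℤ} (ha : IsLeftShift J J' y b a)
    (ha' : IsLeftShift J J' y b a') : a = a' :=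
  le_antisymm (le_of_mem_of_notMem_sub_one (isUpperSet_liftN hJ) ha.1 ha'.2)
    (le_of_mem_of_notMem_sub_one (isUpperSet_liftN hJ) ha'.1 ha.2)

lemma exists_isLeftShift (hfinJ : Jᶜ.Finite) (hfinJ' : J'ᶜ.Finite) {y b : ℕ} (h : (y, b) ∉ J') :
    ∃ a, IsLeftShift J J' y b a :=
  exists_mem_liftN_notMem_sub_one hfinJ _ (by have := le_colTop hfinJ' h; omega)

lemma exists_natCast_of_mem_transDiff {α p : ℤ × ℤ} (hα : 0 ≤ α.2) (hp : p ∈ TransDiff J J' α)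
    (hp₁ : 0 ≤ p.1) : ∃ y z : ℕ, p = ((y : ℤ), (z : ℤ)) ∧ (y, z) ∉ J' ∧ α.2 ≤ z := by
  obtain ⟨⟨-, hz, -⟩, hpJ'⟩ := hp
  obtain ⟨x, z⟩ := p
  simp only at hz hp₁
  lift x to ℕ using hp₁
  lift z to ℕ using (by omega)
  exact ⟨x, z, rfl, by simpa using hpJ', by omega⟩

lemma finite_transDiff_inter_fst_nonneg (hfinJ' : J'ᶜ.Finite) {α : ℤ × ℤ} (hα : 0 ≤ α.2) :
    {p ∈ TransDiff J J' α | 0 ≤ p.1}.Finite :=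
  (hfinJ'.image fun n => ((n.1 : ℤ), (n.2 : ℤ))).subset fun _ ⟨hp, hp₁⟩ => by
    obtain ⟨y, z, rfl, hyz, -⟩ := exists_natCast_of_mem_transDiff hα hp hp₁
    exact ⟨(y, z), hyz, rfl⟩

lemma mem_transDiff_of_le_of_le (hJ : IsUpperSet J) (hJ' : IsUpperSet J') {α : ℤ × ℤ}
    {x z w c : ℤ} (hz : (x, z) ∈ TransDiff J J' α) (hc : (x, c) ∉ liftN J') (hzw : z ≤ w)
    (hwc : w ≤ c) : (x, w) ∈ TransDiff J J' α :=
  ⟨isUpperSet_liftN hJ (Prod.mk_le_mk.2 ⟨le_rfl, by simp; omega⟩) hz.1,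
    fun h => hc (isUpperSet_liftN hJ' (Prod.mk_le_mk.2 ⟨le_rfl, hwc⟩) h)⟩

section LeftShift

variable {y b : ℕ} {a : ℤ}

lemma colTop_mem_transDiff (hfinJ' : J'ᶜ.Finite) (hyb : (y, b) ∉ J')
    (ha : IsLeftShift J J' y b a) :
    ((y : ℤ), (colTop J' y : ℤ)) ∈ TransDiff J J' (a, b) :=
  ⟨ha.1, by simpa using colTop_notMem hfinJ' hyb⟩

lemma IsLeftShift.notMem_transDiff_left (hJ : IsUpperSet J) (hfinJ' : J'ᶜ.Finite)
    (ha : IsLeftShift J J' y b a) (w : ℤ) (hw : ((y : ℤ), w) ∈ TransDiff J J' (a, b)) :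
    ((y : ℤ) - 1, w) ∉ TransDiff J J' (a, b) := by
  rintro ⟨hleft, -⟩
  obtain ⟨⟨-, hwb, -⟩, hwJ'⟩ := hw
  simp only at hwb hleft
  lift w to ℕ using by omega
  have hwc : w ≤ colTop J' y := le_colTop hfinJ' (by simpa using hwJ')
  exact ha.2 (isUpperSet_liftN hJ (Prod.mk_le_mk.2 ⟨le_rfl, by omega⟩) hleft)

lemma IsLeftShift.le_fst_of_mem_componentOf (hJ : IsUpperSet J) (hfinJ' : J'ᶜ.Finite)
    (ha : IsLeftShift J J' y b a) {q : ℤ × ℤ}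
    (hq : q ∈ componentOf (TransDiff J J' (a, b)) ((y : ℤ), (colTop J' y : ℤ))) : (y : ℤ) ≤ q.1 :=
  _root_.le_fst_of_mem_componentOf (ha.notMem_transDiff_left hJ hfinJ') le_rfl hq

lemma IsLeftShift.finite_componentOf (hJ : IsUpperSet J) (hfinJ' : J'ᶜ.Finite)
    (hyb : (y, b) ∉ J') (ha : IsLeftShift J J' y b a) :
    (componentOf (TransDiff J J' (a, b)) ((y : ℤ), (colTop J' y : ℤ))).Finite :=
  (finite_transDiff_inter_fst_nonneg hfinJ' (Nat.cast_nonneg b)).subset fun _ hq =>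
    ⟨mem_of_mem_componentOf (colTop_mem_transDiff hfinJ' hyb ha) hq,
      (Nat.cast_nonneg y).trans (ha.le_fst_of_mem_componentOf hJ hfinJ' hq)⟩

lemma IsLeftShift.sInf_fst_componentOf (hJ : IsUpperSet J) (hfinJ' : J'ᶜ.Finite)
    (ha : IsLeftShift J J' y b a) :
    sInf (Prod.fst '' componentOf (TransDiff J J' (a, b)) ((y : ℤ), (colTop J' y : ℤ))) = y :=
  IsLeast.csInf_eq ⟨⟨_, .refl, rfl⟩, by
    rintro _ ⟨q, hq, rfl⟩
    exact ha.le_fst_of_mem_componentOf hJ hfinJ' hq⟩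

lemma fst_nonneg_of_finite_componentOf (hJ : IsUpperSet J) {α p₀ q : ℤ × ℤ}
    (hp₀ : p₀ ∈ TransDiff J J' α) (hfin : (componentOf (TransDiff J J' α) p₀).Finite)
    (hq : q ∈ componentOf (TransDiff J J' α) p₀) : 0 ≤ q.1 := by
  by_contra! hneg
  have hqT := mem_of_mem_componentOf hp₀ hq
  obtain ⟨x, z⟩ := q
  have hray (n : ℕ) : (x, z + n) ∈ componentOf (TransDiff J J' α) p₀ :=
    Relation.ReflTransGen.trans hq <| mem_componentOf_of_segment (by omega) fun _ hzw _ =>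
      ⟨isUpperSet_liftN hJ (Prod.mk_le_mk.2 ⟨le_rfl, by simp; omega⟩) hqT.1,
        notMem_liftN_of_fst_neg hneg⟩
  exact Set.infinite_of_injective_forall_mem (fun m n h => by simpa using h) hray hfin

lemma exists_isLeftShift_of_finite_componentOf (hJ : IsUpperSet J) (hJ' : IsUpperSet J')
    (hfinJ' : J'ᶜ.Finite) {p₀ : ℤ × ℤ} (hp₀ : p₀ ∈ TransDiff J J' (a, b))
    (hfin : (componentOf (TransDiff J J' (a, b)) p₀).Finite) :
    ∃ y : ℕ, sInf (Prod.fst '' componentOf (TransDiff J J' (a, b)) p₀) = y ∧ (y, b) ∉ J' ∧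
      IsLeftShift J J' y b a ∧ componentOf (TransDiff J J' (a, b)) p₀ =
        componentOf (TransDiff J J' (a, b)) ((y : ℤ), (colTop J' y : ℤ)) := by
  set T := TransDiff J J' (a, b)
  set U := componentOf T p₀
  obtain ⟨q, hqU, hq⟩ :=
    Set.Nonempty.csInf_mem (s := Prod.fst '' U) ⟨_, p₀, .refl, rfl⟩ (hfin.image _)
  have hqT := mem_of_mem_componentOf hp₀ hqU
  obtain ⟨y, z, rfl, hyz, hbz⟩ := exists_natCast_of_mem_transDiff (Nat.cast_nonneg b) hqT
    (fst_nonneg_of_finite_componentOf hJ hp₀ hfin hqU)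
  simp only at hq hbz
  have hc : ((y : ℤ), (colTop J' y : ℤ)) ∉ liftN J' := by simpa using colTop_notMem hfinJ' hyz
  have hcU : ((y : ℤ), (colTop J' y : ℤ)) ∈ U :=
    Relation.ReflTransGen.trans hqU <| mem_componentOf_of_segment
      (by simpa using le_colTop hfinJ' hyz) fun _ hzw hwc =>
        mem_transDiff_of_le_of_le hJ hJ' hqT hc hzw hwc
  have hcT := mem_of_mem_componentOf hp₀ hcU
  have hleft : ((y : ℤ) - 1, (colTop J' y : ℤ)) ∉ T := fun h => by
    have hU : ((y : ℤ) - 1, (colTop J' y : ℤ)) ∈ U :=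
      Relation.ReflTransGen.tail hcU ⟨hcT, h, by simp⟩
    have := csInf_le (hfin.image Prod.fst).bddBelow (Set.mem_image_of_mem Prod.fst hU)
    simp only at this
    omega
  refine ⟨y, hq.symm, fun h => hyz (hJ' (Prod.mk_le_mk.2 ⟨le_rfl, by omega⟩) h),
    ⟨hcT.1, fun h => hleft ⟨h, fun h' => hc ?_⟩⟩, (componentOf_eq_of_mem hcU).symm⟩
  exact isUpperSet_liftN hJ' (Prod.mk_le_mk.2 ⟨by omega, le_rfl⟩) h'

end LeftShift

def boundedComponents (J J' : Set (ℕ × ℕ)) : Set (Set (ℤ × ℤ) × (ℤ × ℤ)) :=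
  {Uα | 0 ≤ Uα.2.2 ∧ IsComponent (TransDiff J J' Uα.2) Uα.1 ∧ Uα.1.Finite}

noncomputable def leftmostColumn (Uα : Set (ℤ × ℤ) × (ℤ × ℤ)) : ℕ × ℕ :=
  ((sInf (Prod.fst '' Uα.1)).toNat, Uα.2.2.toNat)

lemma exists_isLeftShift_of_mem_boundedComponents (hJ : IsUpperSet J) (hJ' : IsUpperSet J')
    (hfinJ' : J'ᶜ.Finite) {Uα : Set (ℤ × ℤ) × (ℤ × ℤ)} (h : Uα ∈ boundedComponents J J') :
    ∃ (y b : ℕ) (a : ℤ), leftmostColumn Uα = (y, b) ∧ (y, b) ∉ J' ∧ IsLeftShift J J' y b a ∧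
      Uα = (componentOf (TransDiff J J' (a, b)) ((y : ℤ), (colTop J' y : ℤ)), (a, (b : ℤ))) := by
  obtain ⟨U, a, b⟩ := Uα
  obtain ⟨hb, ⟨p₀, hp₀, hU⟩, hfin⟩ := h
  dsimp only at hb hp₀ hU hfin
  replace hU : U = componentOf _ p₀ := hU
  subst hU
  lift b to ℕ using hb
  obtain ⟨y, hy, hyb, ha, hU⟩ := exists_isLeftShift_of_finite_componentOf hJ hJ' hfinJ' hp₀ hfin
  exact ⟨y, b, a, by simp [leftmostColumn, hy], hyb, ha, by rw [hU]⟩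

theorem bijOn_leftmostColumn (hJ : IsUpperSet J) (hJ' : IsUpperSet J') (hfinJ : Jᶜ.Finite)
    (hfinJ' : J'ᶜ.Finite) : Set.BijOn leftmostColumn (boundedComponents J J') J'ᶜ := by
  refine ⟨fun Uα h => ?_, fun Uα h Uα' h' heq => ?_, ?_⟩
  · obtain ⟨y, b, a, hl, hyb, -⟩ := exists_isLeftShift_of_mem_boundedComponents hJ hJ' hfinJ' h
    rwa [hl]
  · obtain ⟨y, b, a, hl, -, ha, rfl⟩ :=
      exists_isLeftShift_of_mem_boundedComponents hJ hJ' hfinJ' h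
    obtain ⟨y', b', a', hl', -, ha', rfl⟩ :=
      exists_isLeftShift_of_mem_boundedComponents hJ hJ' hfinJ' h'
    obtain ⟨rfl, rfl⟩ := Prod.mk.inj (hl.symm.trans (heq.trans hl'))
    rw [ha.eq hJ ha']
  · rintro ⟨y, b⟩ hyb
    obtain ⟨a, ha⟩ := exists_isLeftShift hfinJ hfinJ' hyb
    refine ⟨(componentOf (TransDiff J J' (a, b)) ((y : ℤ), (colTop J' y : ℤ)), (a, b)),
      ⟨Nat.cast_nonneg b, ⟨_, colTop_mem_transDiff hfinJ' hyb ha, rfl⟩,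
        ha.finite_componentOf hJ hfinJ' hyb⟩, ?_⟩
    simp [leftmostColumn, ha.sInf_fst_componentOf hJ hfinJ']

end Staircases

/-- Claim 1 in the proof of Lemma 2.7: for staircases `J̃, J̃' ⊆ ℕ²`, there is a
bijection between `ℕ² \ J̃'` and the set `A_p` of pairs `(U, α)` with `α_z ≥ 0`
and `U` a bounded connected component of `(J̃ + α) \ J̃'` (in `ℤ²`). -/
theorem bijection_Ap (J J' : Set (ℕ × ℕ))
    (hupJ : ∀ γ ∈ J, ∀ δ : ℕ × ℕ, γ.1 ≤ δ.1 → γ.2 ≤ δ.2 → δ ∈ J)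
    (hfinJ : Jᶜ.Finite)
    (hupJ' : ∀ γ ∈ J', ∀ δ : ℕ × ℕ, γ.1 ≤ δ.1 → γ.2 ≤ δ.2 → δ ∈ J')
    (hfinJ' : J'ᶜ.Finite) :
    Nonempty
      ((J'ᶜ : Set (ℕ × ℕ)) ≃
        {Uα : Set (ℤ × ℤ) × (ℤ × ℤ) //
          0 ≤ Uα.2.2 ∧ IsComponent (TransDiff J J' Uα.2) Uα.1 ∧ Uα.1.Finite}) := by
  have hJ : IsUpperSet J := fun γ δ h hγ => hupJ γ hγ δ h.1 h.2
  have hJ' : IsUpperSet J' := fun γ δ h hγ => hupJ' γ hγ δ h.1 h.2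
  exact ⟨((bijOn_leftmostColumn hJ hJ' hfinJ hfinJ').equiv _).symm⟩
end
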